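/- Let L be a left Leibniz algebra, L̄ its Lie quotient, and V an L̄-module, and put W = V ⊕ (L⊗V). Equip k[T]⊗gl(W), viewed as the current conformal algebra Cur gl(W) with its λ-bracket, with the Leibniz bracket [X,Y] = (X_λ Y)|_{λ=0}. Then the map ρ(x) = 1⊗ρ₀(x) + T⊗ρ₁(x) (with ρ₀, ρ₁ as in the conformal representation construction) is a homomorphism of Leibniz algebras from L to k[T]⊗gl(W): ρ([x,y]) = [ρ(x),ρ(y)]. -/
import Mathlib


open TensorProduct

/-- The λ-product of the current conformal algebra `Cur A = k[T] ⊗ A`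
(over a k-module `A` with a bilinear multiplication `mul`), in the
coefficient encoding: `Cur A = ℕ →₀ A` (the index is the power of `T`),
and a λ-polynomial is `ℕ →₀ (ℕ →₀ A)` (the outer index is the power of λ).
On generators, `(T^m ⊗ a)_λ (T^n ⊗ b) = (−λ)^m (T+λ)^n ⊗ (a·b)`. -/
noncomputable def curProd (k : Type*) {A : Type*} [Field k] [AddCommGroup A]
    [Module k A] (mul : A → A → A) (y z : ℕ →₀ A) : ℕ →₀ (ℕ →₀ A) :=
  y.sum fun m a => z.sum fun n b =>
    (Finset.range (n + 1)).sum fun i =>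
      Finsupp.single (m + i)
        (Finsupp.single (n - i) (((-1 : k) ^ m * (n.choose i : k)) • mul a b))

/-- `ρ₀(x)` on `W = V ⊕ (L ⊗ V)`: `v ↦ x̄v`, `a⊗v ↦ a⊗x̄v + [x,a]⊗v`. -/
noncomputable def rho0 {k L V : Type*} [Field k] [AddCommGroup L] [Module k L]
    [AddCommGroup V] [Module k V]
    (brk : L →ₗ[k] L →ₗ[k] L) (α : L →ₗ[k] Module.End k V) (x : L) :
    Module.End k (V × (L ⊗[k] V)) :=
  LinearMap.prodMap (α x)
    (LinearMap.lTensor L (α x) + TensorProduct.map (brk x) LinearMap.id)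

/-- `ρ₁(x)` on `W = V ⊕ (L ⊗ V)`: `v ↦ x⊗v`, `a⊗v ↦ 0`. -/
noncomputable def rho1 {k L V : Type*} [Field k] [AddCommGroup L] [Module k L]
    [AddCommGroup V] [Module k V] (x : L) :
    Module.End k (V × (L ⊗[k] V)) :=
  LinearMap.prod 0 ((TensorProduct.mk k L V x).comp (LinearMap.fst k V (L ⊗[k] V)))

/-- The conformal representation `ρ(x) = 1⊗ρ₀(x) + T⊗ρ₁(x)` of a Leibniz
algebra in `Cur gl(V ⊕ (L⊗V))`. -/
noncomputable def rho {k L V : Type*} [Field k] [AddCommGroup L] [Module k L]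
    [AddCommGroup V] [Module k V]
    (brk : L →ₗ[k] L →ₗ[k] L) (α : L →ₗ[k] Module.End k V) (x : L) :
    ℕ →₀ Module.End k (V × (L ⊗[k] V)) :=
  Finsupp.single 0 (rho0 brk α x) + Finsupp.single 1 (rho1 (k := k) (V := V) x)

lemma cur0 {k A : Type*} [Field k] [Ring A] [Algebra k A] (A0 A1 B0 B1 : A) :
    (curProd k (fun a b => a * b - b * a)
      (Finsupp.single 0 A0 + Finsupp.single 1 A1)
      (Finsupp.single 0 B0 + Finsupp.single 1 B1)) 0
    = Finsupp.single 0 (A0 * B0 - B0 * A0) + Finsupp.single 1 (A0 * B1 - B1 * A0) := by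
  have h1 : ∀ (m n : ℕ) (a b : A),
      curProd k (fun a b => a * b - b * a) (Finsupp.single m a) (Finsupp.single n b)
      = (Finset.range (n + 1)).sum fun i =>
          Finsupp.single (m + i)
            (Finsupp.single (n - i) (((-1 : k) ^ m * (n.choose i : k)) • (a * b - b * a))) := by
    intro m n a b
    rw [curProd, Finsupp.sum_single_index (by simp), Finsupp.sum_single_index (by simp)]
  have hadd1 : ∀ (y y' z : ℕ →₀ A),
      curProd k (fun a b => a * b - b * a) (y + y') z
      = curProd k (fun a b => a * b - b * a) y z
        + curProd k (fun a b => a * b - b * a) y' z := by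
    intro y y' z
    rw [curProd, curProd, curProd, Finsupp.sum_add_index' (by intro m; simp)]
    intro m a a'
    rw [← Finsupp.sum_add]
    refine Finsupp.sum_congr fun n _ => ?_
    rw [← Finset.sum_add_distrib]
    refine Finset.sum_congr rfl fun i _ => ?_
    rw [← Finsupp.single_add, ← Finsupp.single_add, ← smul_add]
    congr 2
    noncomm_ring
  have hadd2 : ∀ (m : ℕ) (a : A) (z z' : ℕ →₀ A),
      curProd k (fun a b => a * b - b * a) (Finsupp.single m a) (z + z')
      = curProd k (fun a b => a * b - b * a) (Finsupp.single m a) z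
        + curProd k (fun a b => a * b - b * a) (Finsupp.single m a) z' := by
    intro m a z z'
    rw [curProd, curProd, curProd,
      Finsupp.sum_single_index (by simp), Finsupp.sum_single_index (by simp),
      Finsupp.sum_single_index (by simp), Finsupp.sum_add_index' (by intro n; simp)]
    intro n b b'
    rw [← Finset.sum_add_distrib]
    refine Finset.sum_congr rfl fun i _ => ?_
    rw [← Finsupp.single_add, ← Finsupp.single_add, ← smul_add]
    congr 2
    noncomm_ring
  rw [hadd1, hadd2, hadd2, h1, h1, h1, h1]
  simp [Finset.sum_range_succ, Finsupp.single_apply]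

section
variable {k L V : Type*} [Field k] [AddCommGroup L] [Module k L]
    [AddCommGroup V] [Module k V]
    (brk : L →ₗ[k] L →ₗ[k] L) (α : L →ₗ[k] Module.End k V)

lemma key0 (leib : ∀ x y z : L, brk x (brk y z) = brk (brk x y) z + brk y (brk x z))
    (hαLie : ∀ x y : L, α (brk x y) = α x * α y - α y * α x) (x y : L) :
    rho0 brk α (brk x y) = rho0 brk α x * rho0 brk α y - rho0 brk α y * rho0 brk α x := by
  apply LinearMap.ext
  rintro ⟨v, t⟩
  simp only [rho0, Module.End.mul_apply, LinearMap.sub_apply,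
    LinearMap.prodMap_apply, Prod.mk_sub_mk]
  refine Prod.ext ?_ ?_ <;> simp only []
  · simp [hαLie]
  · induction t using TensorProduct.induction_on with
    | zero => simp
    | add s t hs ht =>
        simp only [map_add] at *
        rw [hs, ht]; abel
    | tmul a v =>
        simp only [LinearMap.add_apply, LinearMap.lTensor_tmul, TensorProduct.map_tmul,
          LinearMap.id_coe, id_eq, map_add, hαLie, leib x y a, map_add, LinearMap.add_apply,
          LinearMap.sub_apply, Module.End.mul_apply]
        simp only [TensorProduct.tmul_sub, TensorProduct.tmul_add, TensorProduct.add_tmul, TensorProduct.sub_tmul]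
        abel

lemma key1 (x y : L) :
    rho1 (k := k) (V := V) (brk x y) =
      rho0 brk α x * rho1 (k := k) (V := V) y - rho1 (k := k) (V := V) y * rho0 brk α x := by
  apply LinearMap.ext
  rintro ⟨v, t⟩
  simp [rho0, rho1, TensorProduct.tmul_add]

end

/-- for a left Leibniz algebra `L`, its Lie quotient module `V`
(encoded by `α` as in the conformal representation construction), the map
`ρ(x) = 1⊗ρ₀(x) + T⊗ρ₁(x)` is a homomorphism of Leibniz algebras into
`(Cur gl(V ⊕ (L⊗V)))⁽⁰⁾`, whose Leibniz bracket is
`[X,Y] = (X_λ Y)|_{λ=0}`, i.e. the 0-th λ-coefficient of the current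
λ-bracket (the coefficient multiplication being the commutator `AB − BA`). -/
theorem stmt13 {k L V : Type*} [Field k] [CharZero k]
    [AddCommGroup L] [Module k L] [AddCommGroup V] [Module k V]
    (brk : L →ₗ[k] L →ₗ[k] L)
    (leib : ∀ x y z : L,
      brk x (brk y z) = brk (brk x y) z + brk y (brk x z))
    (α : L →ₗ[k] Module.End k V)
    (hα0 : ∀ a b : L, α (brk a b + brk b a) = 0)
    (hαLie : ∀ x y : L, α (brk x y) = α x * α y - α y * α x) :
    ∀ x y : L,
      rho brk α (brk x y) =
        (curProd k (fun A B : Module.End k (V × (L ⊗[k] V)) => A * B - B * A)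
          (rho brk α x) (rho brk α y)) 0 := by
  intro x y
  rw [rho, key0 brk α leib hαLie x y, key1 brk α x y, ← cur0 (k := k), rho, rho]
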